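/- arXiv:2207.00640 — 2 statements merged into one kernel-verified Lean document; each statement's English description precedes it below -/
import Mathlib

section
/- Let X be a separable Banach space, μ a Borel probability measure on X assigning positive mass to every open ball, and let Φ and the posterior μ^y satisfy Assumption (Φ). Then for any asymptotic maximizing family (ζ^δ)_{δ>0} in X for μ^y there exist constants K > 0 and δ₀ > 0 such that for every 0 < δ < δ₀ one has μ(B_δ(ζ^δ)) ≥ K · μ(B_δ(0)). -/
/-
Write `ν` for the posterior. Since `Φ ≥ M` everywhere and `Φ ≤ K` on the unit ball, the
unnormalised density `exp (-Φ)` of `ν` with respect to `μ` lies below `exp (-M)` everywhere and above `exp (-K)` on small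
balls around `0`. Once `ε^δ < 1/2`, the AMF property gives `ν(B_δ(0)) ≤ 2 ν(B_δ(ζ^δ))`; bounding the
left side from below and the right side from above by the density bounds and cancelling the
normalising constant (positive because `μ ≠ 0`) yields `μ(B_δ(ζ^δ)) ≥ exp (M - K) / 2 · μ(B_δ(0))`.
-/

open MeasureTheory Filter Metric Set
open scoped ENNReal Topology

noncomputable section

/-- `ζ` (indexed by the radius `δ > 0`) is an asymptotic maximizing family (AMF) for `ν`. -/
def IsAMF {X : Type*} [NormedAddCommGroup X] [MeasurableSpace X]
    (ν : Measure X) (ζ : ℝ → X) : Prop :=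
  ∃ ε : ℝ → ℝ, (∀ δ > (0 : ℝ), ε δ ∈ Set.Ioo (0 : ℝ) 1) ∧
    Tendsto ε (𝓝[>] (0 : ℝ)) (𝓝 0) ∧
    ∀ δ > (0 : ℝ), ENNReal.ofReal (1 - ε δ) * (⨆ z : X, ν (ball z δ)) < ν (ball (ζ δ) δ)

/-- The posterior measure `μ^y(A) = Z⁻¹ ∫_A exp(-Φ u) dμ(u)`, `Z = ∫ exp(-Φ u) dμ(u)`. -/
def posterior {X : Type*} [MeasurableSpace X] (μ : Measure X) (Φ : X → ℝ) : Measure X :=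
  (ENNReal.ofReal (∫ u, Real.exp (-Φ u) ∂μ))⁻¹ •
    μ.withDensity fun u => ENNReal.ofReal (Real.exp (-Φ u))

open Real

section Posterior

variable {X : Type*} [MeasurableSpace X] {μ : Measure X} {Φ : X → ℝ} {M K : ℝ} {A B : Set X}

lemma posterior_apply (hA : MeasurableSet A) :
    posterior μ Φ A = (ENNReal.ofReal (∫ u, exp (-Φ u) ∂μ))⁻¹ *
      ∫⁻ u in A, ENNReal.ofReal (exp (-Φ u)) ∂μ := by
  rw [posterior, Measure.smul_apply, withDensity_apply _ hA, smul_eq_mul]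

lemma integrable_exp_neg_of_forall_le [IsFiniteMeasure μ] (hΦ : Measurable Φ)
    (hM : ∀ u, M ≤ Φ u) : Integrable (fun u => exp (-Φ u)) μ :=
  Integrable.of_bound (by fun_prop) (exp (-M)) <| ae_of_all _ fun u => by
    rw [norm_of_nonneg (exp_pos _).le]
    exact exp_le_exp.2 (neg_le_neg (hM u))

lemma setLIntegral_ofReal_exp_neg_le (hM : ∀ u, M ≤ Φ u) :
    ∫⁻ u in A, ENNReal.ofReal (exp (-Φ u)) ∂μ ≤ ENNReal.ofReal (exp (-M)) * μ A :=
  calc ∫⁻ u in A, ENNReal.ofReal (exp (-Φ u)) ∂μ ≤ ∫⁻ _ in A, ENNReal.ofReal (exp (-M)) ∂μ :=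
        lintegral_mono fun u => ENNReal.ofReal_le_ofReal (exp_le_exp.2 (neg_le_neg (hM u)))
    _ = ENNReal.ofReal (exp (-M)) * μ A := setLIntegral_const _ _

lemma ofReal_exp_neg_mul_le_setLIntegral (hΦ : Measurable Φ) (hK : ∀ u ∈ A, Φ u ≤ K) :
    ENNReal.ofReal (exp (-K)) * μ A ≤ ∫⁻ u in A, ENNReal.ofReal (exp (-Φ u)) ∂μ := by
  rw [← setLIntegral_const]
  exact setLIntegral_mono (by fun_prop) fun u hu =>
    ENNReal.ofReal_le_ofReal (exp_le_exp.2 (neg_le_neg (hK u hu)))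

lemma mul_ofReal_exp_sub_mul_le_of_le_posterior [IsFiniteMeasure μ] [NeZero μ]
    (hΦ : Measurable Φ) (hM : ∀ u, M ≤ Φ u) (hK : ∀ u ∈ A, Φ u ≤ K) (hA : MeasurableSet A)
    (hB : MeasurableSet B) {c : ℝ≥0∞} (h : c * posterior μ Φ A ≤ posterior μ Φ B) :
    c * ENNReal.ofReal (exp (M - K)) * μ A ≤ μ B := by
  set Z := ENNReal.ofReal (∫ u, exp (-Φ u) ∂μ)
  have hZ : Z ≠ 0 := (ENNReal.ofReal_pos.2 <|
    integral_exp_pos (integrable_exp_neg_of_forall_le hΦ hM)).ne'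
  have hposterior : Z⁻¹ * (c * (ENNReal.ofReal (exp (-K)) * μ A)) ≤
      Z⁻¹ * (ENNReal.ofReal (exp (-M)) * μ B) :=
    calc Z⁻¹ * (c * (ENNReal.ofReal (exp (-K)) * μ A))
        = c * (Z⁻¹ * (ENNReal.ofReal (exp (-K)) * μ A)) := by ring
      _ ≤ c * posterior μ Φ A := by
          rw [posterior_apply hA]; gcongr; exact ofReal_exp_neg_mul_le_setLIntegral hΦ hK
      _ ≤ posterior μ Φ B := h
      _ ≤ Z⁻¹ * (ENNReal.ofReal (exp (-M)) * μ B) := by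
          rw [posterior_apply hB]; gcongr; exact setLIntegral_ofReal_exp_neg_le hM
  have hprior := (ENNReal.mul_le_mul_iff_right (ENNReal.inv_ne_zero.2 ENNReal.ofReal_ne_top)
    (ENNReal.inv_ne_top.2 hZ)).1 hposterior
  calc c * ENNReal.ofReal (exp (M - K)) * μ A
      = ENNReal.ofReal (exp M) * (c * (ENNReal.ofReal (exp (-K)) * μ A)) := by
        rw [sub_eq_add_neg, exp_add, ENNReal.ofReal_mul (exp_pos _).le]; ring
    _ ≤ ENNReal.ofReal (exp M) * (ENNReal.ofReal (exp (-M)) * μ B) := by gcongr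
    _ = μ B := by
        rw [← mul_assoc, ← ENNReal.ofReal_mul (exp_pos _).le, ← exp_add, add_neg_cancel, exp_zero,
          ENNReal.ofReal_one, one_mul]

end Posterior

lemma IsAMF.eventually_inv_two_mul_le {X : Type*} [NormedAddCommGroup X] [MeasurableSpace X]
    {ν : Measure X} {ζ : ℝ → X} (hζ : IsAMF ν ζ) (z : X) :
    ∀ᶠ δ in 𝓝[>] 0, 2⁻¹ * ν (ball z δ) ≤ ν (ball (ζ δ) δ) := by
  obtain ⟨ε, -, hε0, hmax⟩ := hζ
  filter_upwards [hε0.eventually (eventually_lt_nhds (by norm_num : (0 : ℝ) < 2⁻¹)),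
    self_mem_nhdsWithin] with δ hεδ hδ
  calc 2⁻¹ * ν (ball z δ)
      ≤ ENNReal.ofReal (1 - ε δ) * ⨆ z' : X, ν (ball z' δ) := by
        gcongr
        · rw [← ENNReal.ofReal_ofNat, ← ENNReal.ofReal_inv_of_pos two_pos]
          exact ENNReal.ofReal_le_ofReal (by linarith)
        · exact le_iSup (fun z' => ν (ball z' δ)) z
    _ ≤ ν (ball (ζ δ) δ) := (hmax δ hδ).le

theorem amf_prior_ball_lower_bound_general {X : Type*} [NormedAddCommGroup X]
    [MeasurableSpace X] [BorelSpace X]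
    (μ : Measure X) [IsProbabilityMeasure μ]
    (Φ : X → ℝ) (hΦmeas : Measurable Φ)
    (hbdd : ∃ M : ℝ, ∀ u : X, M ≤ Φ u)
    (hloc : ∀ r > (0 : ℝ), ∃ K > (0 : ℝ), ∀ u : X, ‖u‖ < r → Φ u ≤ K)
    (ζ : ℝ → X) (hζ : IsAMF (posterior μ Φ) ζ) :
    ∃ K : ℝ≥0∞, 0 < K ∧ ∃ δ₀ > (0 : ℝ), ∀ δ : ℝ, 0 < δ → δ < δ₀ →
      K * μ (ball 0 δ) ≤ μ (ball (ζ δ) δ) := by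
  obtain ⟨M, hM⟩ := hbdd
  obtain ⟨K, -, hK⟩ := hloc 1 one_pos
  obtain ⟨δ₀, hδ₀, hsmall⟩ := (nhdsGT_basis (0 : ℝ)).eventually_iff.1 <|
    (hζ.eventually_inv_two_mul_le 0).and (Ioo_mem_nhdsGT one_pos)
  refine ⟨2⁻¹ * ENNReal.ofReal (exp (M - K)), by simp [exp_pos], δ₀, hδ₀, fun δ hδ hδδ₀ => ?_⟩
  obtain ⟨hpost, -, hδ1⟩ := hsmall ⟨hδ, hδδ₀⟩
  have hΦball : ∀ u ∈ ball (0 : X) δ, Φ u ≤ K := fun u hu =>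
    hK u ((mem_ball_zero_iff.1 hu).trans hδ1)
  exact mul_ofReal_exp_sub_mul_le_of_le_posterior hΦmeas hM hΦball measurableSet_ball
    measurableSet_ball hpost

/-- For any AMF `ζ` for the posterior `μ^y`, there are `K > 0` and `δ₀ > 0` with
`μ(B_δ(ζ^δ)) ≥ K · μ(B_δ(0))` for all `0 < δ < δ₀`. -/
theorem amf_prior_ball_lower_bound {X : Type*} [NormedAddCommGroup X] [NormedSpace ℝ X]
    [CompleteSpace X] [TopologicalSpace.SeparableSpace X]
    [MeasurableSpace X] [BorelSpace X]
    (μ : Measure X) [IsProbabilityMeasure μ]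
    (hball : ∀ (x : X) (δ : ℝ), 0 < δ → 0 < μ (ball x δ))
    (Φ : X → ℝ) (hΦmeas : Measurable Φ)
    (hbdd : ∃ M : ℝ, ∀ u : X, M ≤ Φ u)
    (hloc : ∀ r > (0 : ℝ), ∃ K > (0 : ℝ), ∀ u : X, ‖u‖ < r → Φ u ≤ K)
    (hlip : ∀ r > (0 : ℝ), ∃ L > (0 : ℝ), ∀ u₁ u₂ : X, ‖u₁‖ ≤ r → ‖u₂‖ ≤ r →
      |Φ u₁ - Φ u₂| ≤ L * ‖u₁ - u₂‖)
    (hΦ0 : Φ 0 = 0)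
    (ζ : ℝ → X) (hζ : IsAMF (posterior μ Φ) ζ) :
    ∃ K : ℝ≥0∞, 0 < K ∧ ∃ δ₀ > (0 : ℝ), ∀ δ : ℝ, 0 < δ → δ < δ₀ →
      K * μ (ball 0 δ) ≤ μ (ball (ζ δ) δ) :=
  amf_prior_ball_lower_bound_general μ Φ hΦmeas hbdd hloc ζ hζ
end
end

section
/- Let 1 ≤ p < ∞, α = min(p,2), k ∈ ℕ, γ > 0, and ρ ∈ ℝ^k with ρ₁ ≥ ρ₂ ≥ ⋯ ≥ ρ_k > 0. Define L_{ρ,γ} : ℝ^k → ℝ by L_{ρ,γ}(x) = ∑_{j=1}^k ( (γ²ρ_j² + x_j²)^{p/2} − (γρ_j)^p ) if 1 ≤ p ≤ 2, and L_{ρ,γ}(x) = ‖x‖_p² if 2 < p < ∞. Then for every x ∈ ℝ^k, ‖x‖_p^α − γ^α ‖ρ‖_p^α ≤ L_{ρ,γ}(x) ≤ ‖x‖_p^α. -/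
open Real Set

noncomputable section

/-- The `ℓᵖ` norm on `ℝᵏ`. -/
def pnormFin {k : ℕ} (p : ℝ) (x : Fin k → ℝ) : ℝ := (∑ j, |x j| ^ p) ^ (1 / p)

/-- The function `L_{ρ,γ}` of the convexification result. -/
def Lfun {k : ℕ} (p γ : ℝ) (ρ : Fin k → ℝ) (x : Fin k → ℝ) : ℝ :=
  if p ≤ 2 then ∑ j, ((γ ^ 2 * ρ j ^ 2 + x j ^ 2) ^ (p / 2) - (γ * ρ j) ^ p)
  else pnormFin p x ^ 2

/-
For `p ≤ 2` the bounds hold coordinatewise: with `c = γ ρ_j`, monotonicity of `s ↦ s^{p/2}`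
gives `|x_j|^p ≤ (c² + x_j²)^{p/2}`, and its subadditivity (as `p/2 ≤ 1`) gives
`(c² + x_j²)^{p/2} ≤ c^p + |x_j|^p`. Summing over `j` yields the claim. For `p > 2` the lower
bound only drops a nonnegative term.
-/

lemma pnormFin_nonneg {k : ℕ} (p : ℝ) (x : Fin k → ℝ) : 0 ≤ pnormFin p x :=
  rpow_nonneg (Finset.sum_nonneg fun _ _ => rpow_nonneg (abs_nonneg _) _) _

lemma pnormFin_rpow {k : ℕ} {p : ℝ} (hp : 0 < p) (x : Fin k → ℝ) :
    pnormFin p x ^ p = ∑ j, |x j| ^ p := by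
  have hs : 0 ≤ ∑ j, |x j| ^ p :=
    Finset.sum_nonneg fun j _ => rpow_nonneg (abs_nonneg _) _
  rw [pnormFin, ← rpow_mul hs, one_div, inv_mul_cancel₀ hp.ne', rpow_one]

lemma rpow_mul_pnormFin_rpow {k : ℕ} {p γ : ℝ} (hp : 0 < p) (hγ : 0 ≤ γ) {ρ : Fin k → ℝ}
    (hρ : ∀ j, 0 ≤ ρ j) : γ ^ p * pnormFin p ρ ^ p = ∑ j, (γ * ρ j) ^ p := by
  rw [pnormFin_rpow hp, Finset.mul_sum]
  refine Finset.sum_congr rfl fun j _ => ?_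
  rw [abs_of_nonneg (hρ j), mul_rpow hγ (hρ j)]

lemma sq_rpow_div_two (a p : ℝ) : (a ^ 2) ^ (p / 2) = |a| ^ p := by
  rw [← sq_abs, ← rpow_natCast |a| 2, ← rpow_mul (abs_nonneg _)]
  congr 1
  ring

lemma abs_rpow_le_sq_add_sq_rpow_div_two {p : ℝ} (hp : 0 ≤ p) (c t : ℝ) :
    |t| ^ p ≤ (c ^ 2 + t ^ 2) ^ (p / 2) := by
  rw [← sq_rpow_div_two]
  exact rpow_le_rpow (sq_nonneg t) (le_add_of_nonneg_left (sq_nonneg c)) (by positivity)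

lemma sq_add_sq_rpow_div_two_le {p : ℝ} (hp : 0 ≤ p) (hp2 : p ≤ 2) (c t : ℝ) :
    (c ^ 2 + t ^ 2) ^ (p / 2) ≤ |c| ^ p + |t| ^ p := by
  rw [← sq_rpow_div_two c, ← sq_rpow_div_two t]
  exact rpow_add_le_add_rpow (sq_nonneg c) (sq_nonneg t) (by positivity) (by linarith)

lemma Lfun_bounds_of_le_two {k : ℕ} {p γ : ℝ} (hp : 0 < p) (hp2 : p ≤ 2) (hγ : 0 ≤ γ)
    {ρ : Fin k → ℝ} (hρ : ∀ j, 0 ≤ ρ j) (x : Fin k → ℝ) :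
    pnormFin p x ^ p - γ ^ p * pnormFin p ρ ^ p ≤ Lfun p γ ρ x ∧
      Lfun p γ ρ x ≤ pnormFin p x ^ p := by
  have hc : ∀ j, |γ * ρ j| = γ * ρ j := fun j => abs_of_nonneg (mul_nonneg hγ (hρ j))
  rw [Lfun, if_pos hp2, pnormFin_rpow hp, rpow_mul_pnormFin_rpow hp hγ hρ,
    ← Finset.sum_sub_distrib]
  constructor
  · refine Finset.sum_le_sum fun j _ => ?_
    have := abs_rpow_le_sq_add_sq_rpow_div_two hp.le (γ * ρ j) (x j)
    rw [mul_pow] at this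
    linarith
  · refine Finset.sum_le_sum fun j _ => ?_
    have := sq_add_sq_rpow_div_two_le hp.le hp2 (γ * ρ j) (x j)
    rw [mul_pow, hc] at this
    linarith

lemma Lfun_bounds_of_two_lt {k : ℕ} {p γ : ℝ} (hp2 : 2 < p) (hγ : 0 ≤ γ)
    (ρ x : Fin k → ℝ) :
    pnormFin p x ^ (2 : ℝ) - γ ^ (2 : ℝ) * pnormFin p ρ ^ (2 : ℝ) ≤ Lfun p γ ρ x ∧
      Lfun p γ ρ x ≤ pnormFin p x ^ (2 : ℝ) := by
  rw [Lfun, if_neg hp2.not_ge, rpow_two]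
  have := pnormFin_nonneg p ρ
  exact ⟨sub_le_self _ (by positivity), le_rfl⟩

theorem Lfun_bounds_general (p : ℝ) (hp : 1 ≤ p) (k : ℕ)
    (γ : ℝ) (hγ : 0 < γ) (ρ : Fin k → ℝ) (hρpos : ∀ j, 0 < ρ j)
    (x : Fin k → ℝ) :
    pnormFin p x ^ min p 2 - γ ^ min p 2 * pnormFin p ρ ^ min p 2 ≤ Lfun p γ ρ x ∧
      Lfun p γ ρ x ≤ pnormFin p x ^ min p 2 := by
  rcases le_or_gt p 2 with hp2 | hp2
  · rw [min_eq_left hp2]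
    exact Lfun_bounds_of_le_two (by linarith) hp2 hγ.le (fun j => (hρpos j).le) x
  · rw [min_eq_right hp2.le]
    exact Lfun_bounds_of_two_lt hp2 hγ.le ρ x

/-- With `α = min(p,2)`: `‖x‖_p^α − γ^α ‖ρ‖_p^α ≤ L_{ρ,γ}(x) ≤ ‖x‖_p^α` for all `x ∈ ℝᵏ`. -/
theorem Lfun_bounds (p : ℝ) (hp : 1 ≤ p) (k : ℕ) (hk : 0 < k)
    (γ : ℝ) (hγ : 0 < γ) (ρ : Fin k → ℝ) (hρpos : ∀ j, 0 < ρ j) (hρanti : Antitone ρ)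
    (x : Fin k → ℝ) :
    pnormFin p x ^ min p 2 - γ ^ min p 2 * pnormFin p ρ ^ min p 2 ≤ Lfun p γ ρ x ∧
      Lfun p γ ρ x ≤ pnormFin p x ^ min p 2 :=
  Lfun_bounds_general p hp k γ hγ ρ hρpos x
end
end
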